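/- Let μ be a regular TIS state of the F-SSEP with μ(F) = 0. Then μ-almost surely no configuration contains three consecutive empty sites, i.e. μ({η : η(i)=η(i+1)=η(i+2)=0 for some i ∈ ℤ}) = 0. -/

import Mathlib

open MeasureTheory Filter
open scoped ENNReal

attribute [local instance] Classical.propDecidable

noncomputable section
namespace FSSEPPaper

/-- Configuration space of the F-SSEP. -/
abbrev X : Type := ℤ → Bool
/-- Configuration space of the SSM (stack model). -/
abbrev XS : Type := ℤ → ℕ
/-- Parity sequences. -/
abbrev PS : Type := ℤ → Bool

/-- The `(m+1)`-st binary digit of `x`. -/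
def rbit (m : ℕ) (x : ℝ) : Bool := decide (⌊x * 2 ^ (m + 1)⌋ % 2 = 1)

/-- The i.i.d. fair-coin product measure on `ℤ → Bool`, realized through the binary
digits of a uniform random number in `(0,1)`. -/
def coin : Measure (ℤ → Bool) :=
  (volume.restrict (Set.Ioo (0:ℝ) 1)).map (fun x (i : ℤ) => rbit (Encodable.encode i) x)

/-! ### F-SSEP dynamics -/

/-- `wantsR η i`: the particle at `i` attempts to jump to the right. -/
def wantsR (η : X) (i : ℤ) : Bool := η i && η (i - 1) && !η (i + 1)
/-- `wantsL η i`: the particle at `i` attempts to jump to the left. -/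
def wantsL (η : X) (i : ℤ) : Bool := η i && η (i + 1) && !η (i - 1)
/-- The particle at `i` jumps to the right (the coin at the target site resolves conflicts). -/
def jumpsR (η : X) (α : ℤ → Bool) (i : ℤ) : Bool :=
  wantsR η i && (!(wantsL η (i + 2)) || α (i + 1))
/-- The particle at `i` jumps to the left. -/
def jumpsL (η : X) (α : ℤ → Bool) (i : ℤ) : Bool :=
  wantsL η i && (!(wantsR η (i - 2)) || !(α (i - 1)))
/-- One synchronous step of the F-SSEP given the coin field `α`. -/
def fstep (η : X) (α : ℤ → Bool) : X := fun i =>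
  (η i && !(jumpsR η α i) && !(jumpsL η α i)) || jumpsR η α (i - 1) || jumpsL η α (i + 1)

/-- The transition kernel of the F-SSEP. -/
def QF (η : X) : Measure X := coin.map (fstep η)

/-! ### SSM dynamics -/

/-- Net rightward particle flow across the bond `⟨k,k+1⟩` given the coin field `α`. -/
def flow (n : XS) (α : ℤ → Bool) (k : ℤ) : ℤ :=
  if 2 ≤ n k then (if 2 ≤ n (k + 1) then (if α k then 1 else -1) else 1)
  else (if 2 ≤ n (k + 1) then -1 else 0)
/-- One synchronous step of the SSM given the coin field `α`. -/
def sstep (n : XS) (α : ℤ → Bool) : XS := fun i =>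
  ((n i : ℤ) + flow n α (i - 1) - flow n α i).toNat

/-- The transition kernel of the SSM. -/
def QS (n : XS) : Measure XS := coin.map (sstep n)

/-! ### Shifts and classes of measures -/

/-- The shift `τ` on sequences of Booleans: `(τη)(i) = η(i-1)`. -/
def shf (η : ℤ → Bool) : ℤ → Bool := fun i => η (i - 1)
/-- The shift `τ` on stack configurations. -/
def shs (n : XS) : XS := fun i => n (i - 1)

/-- Translation-invariant probability measure on `X`. -/
def TIF (μ : Measure X) : Prop := IsProbabilityMeasure μ ∧ μ.map shf = μ
/-- Translation-invariant stationary state of the F-SSEP. -/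
def TISF (μ : Measure X) : Prop := TIF μ ∧ μ.bind QF = μ
/-- Ergodic translation-invariant measure on `X` (extreme point of the TI measures). -/
def ErgF (μ : Measure X) : Prop := TIF μ ∧ ∀ μ₁ μ₂ : Measure X, TIF μ₁ → TIF μ₂ →
  ∀ p : ℝ≥0∞, 0 < p → p < 1 → μ = p • μ₁ + (1 - p) • μ₂ → μ₁ = μ
/-- Extremal translation-invariant stationary state of the F-SSEP. -/
def ETISF (μ : Measure X) : Prop := TISF μ ∧ ∀ μ₁ μ₂ : Measure X, TISF μ₁ → TISF μ₂ →
  ∀ p : ℝ≥0∞, 0 < p → p < 1 → μ = p • μ₁ + (1 - p) • μ₂ → μ₁ = μ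
/-- A measure on `X` is regular if the all-ones configuration carries no mass. -/
def RegF (μ : Measure X) : Prop := μ {η : X | ∀ i, η i = true} = 0

/-- Translation-invariant probability measure on `X̂`. -/
def TI_S (μ : Measure XS) : Prop := IsProbabilityMeasure μ ∧ μ.map shs = μ
/-- Translation-invariant stationary state of the SSM. -/
def TIS_S (μ : Measure XS) : Prop := TI_S μ ∧ μ.bind QS = μ
/-- Ergodic translation-invariant measure on `X̂`. -/
def Erg_S (μ : Measure XS) : Prop := TI_S μ ∧ ∀ μ₁ μ₂ : Measure XS, TI_S μ₁ → TI_S μ₂ →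
  ∀ p : ℝ≥0∞, 0 < p → p < 1 → μ = p • μ₁ + (1 - p) • μ₂ → μ₁ = μ
/-- Extremal translation-invariant stationary state of the SSM. -/
def ETIS_S (μ : Measure XS) : Prop := TIS_S μ ∧ ∀ μ₁ μ₂ : Measure XS, TIS_S μ₁ → TIS_S μ₂ →
  ∀ p : ℝ≥0∞, 0 < p → p < 1 → μ = p • μ₁ + (1 - p) • μ₂ → μ₁ = μ
/-- A measure on `X̂` is regular if the expected stack height at the origin is finite. -/
def Reg_S (μ : Measure XS) : Prop := ∫⁻ n, (n 0 : ℝ≥0∞) ∂μ ≠ ⊤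

/-! ### Densities -/

/-- `μ` has density `ρ`: a.s. both one-sided Cesàro averages of the configuration equal `ρ`. -/
def densF (μ : Measure X) (ρ : ℝ) : Prop :=
  ∀ᵐ η ∂μ,
    Tendsto (fun N : ℕ => (∑ i ∈ Finset.range N, (if η ((i : ℤ) + 1) then (1:ℝ) else 0)) / (N : ℝ))
      atTop (nhds ρ) ∧
    Tendsto (fun N : ℕ => (∑ i ∈ Finset.range N, (if η (-(i : ℤ) - 1) then (1:ℝ) else 0)) / (N : ℝ))
      atTop (nhds ρ)

/-- `μ` has density `ρ̂`: a.s. both one-sided Cesàro averages of the stack heights equal `ρ̂`. -/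
def densS (μ : Measure XS) (ρ : ℝ) : Prop :=
  ∀ᵐ n ∂μ,
    Tendsto (fun N : ℕ => (∑ i ∈ Finset.range N, (n ((i : ℤ) + 1) : ℝ)) / (N : ℝ)) atTop (nhds ρ) ∧
    Tendsto (fun N : ℕ => (∑ i ∈ Finset.range N, (n (-(i : ℤ) - 1) : ℝ)) / (N : ℝ)) atTop (nhds ρ)

/-! ### Special sets of configurations -/

/-- Frozen F-SSEP configurations: no two adjacent occupied sites. -/
def frozenF : Set X := {η | ∀ i : ℤ, η i = false ∨ η (i + 1) = false}
/-- Frozen SSM configurations: every stack has height `0` or `1`. -/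
def frozenS : Set XS := {n | ∀ i : ℤ, n i ≤ 1}
/-- `X̂*`: no two adjacent short stacks. -/
def XstarS : Set XS := {n | ∀ i : ℤ, ¬(n i ≤ 1 ∧ n (i + 1) ≤ 1)}
/-- The even sector `X̂*_e`: all heights even, no two adjacent zeros. -/
def XeS : Set XS := {n | (∀ i : ℤ, Even (n i)) ∧ ∀ i : ℤ, ¬(n i = 0 ∧ n (i + 1) = 0)}
/-- `H = φ(X̂*)`: the F-SSEP configurations containing none of `000`, `0100`, `0010`, `01010`. -/
def Hset : Set X := {η | ∀ i : ℤ,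
  ¬(η i = false ∧ η (i+1) = false ∧ η (i+2) = false) ∧
  ¬(η i = false ∧ η (i+1) = true ∧ η (i+2) = false ∧ η (i+3) = false) ∧
  ¬(η i = false ∧ η (i+1) = false ∧ η (i+2) = true ∧ η (i+3) = false) ∧
  ¬(η i = false ∧ η (i+1) = true ∧ η (i+2) = false ∧ η (i+3) = true ∧ η (i+4) = false)}

/-- The height profile `h_η`, with `h_η(0) = 0` and increments `(-1)^{η(k)}`. -/
def hgt (η : X) (k : ℤ) : ℤ :=
  (∑ i ∈ Finset.Icc (1:ℤ) k, (if η i then (-1:ℤ) else 1)) -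
    (∑ i ∈ Finset.Icc (k + 1) (0:ℤ), (if η i then (-1:ℤ) else 1))

/-! ### The stationary path measure -/

/-- Finite-dimensional distributions of the stationary F-SSEP Markov chain started from `μ`. -/
def chain (μ : Measure X) : (n : ℕ) → Measure (Fin (n + 1) → X)
  | 0 => μ.map (fun η _ => η)
  | (n + 1) => (chain μ n).bind
      (fun path => (QF (path (Fin.last n))).map (fun η' => Fin.snoc path η'))

/-- `P` is the two-sided stationary path measure of the F-SSEP with one-time marginal `μ`. -/
def IsPathMeasure (μ : Measure X) (P : Measure (ℤ → X)) : Prop :=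
  IsProbabilityMeasure P ∧ ∀ (t : ℤ) (n : ℕ),
    P.map (fun ξ (k : Fin (n + 1)) => ξ (t + ((k : ℕ) : ℤ))) = chain μ n

/-! ### Bernoulli initial states and the time evolution -/

/-- An i.i.d. family of uniform `[0,1]` random variables extracted from a single uniform. -/
def unif01 (x : ℝ) (i : ℤ) : ℝ :=
  ∑' k : ℕ, if rbit (Nat.pair (Encodable.encode i) k) x then ((2:ℝ) ^ (k + 1))⁻¹ else 0

/-- The Bernoulli product measure of density `ρ` on `X`. -/
def bernoulliProd (ρ : ℝ) : Measure X :=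
  (volume.restrict (Set.Ioo (0:ℝ) 1)).map (fun x (i : ℤ) => decide (unif01 x i < ρ))

/-- `iterF μ t = μ Q^t`, the state at time `t` of the F-SSEP started from `μ`. -/
def iterF (μ : Measure X) : ℕ → Measure X
  | 0 => μ
  | (t + 1) => (iterF μ t).bind QF

/-- `S_η`: the sites `i` with `η(i-2) = η(i-1) = η(i) = 0`. -/
def Sset (η : X) : Set ℤ := {i | η (i - 2) = false ∧ η (i - 1) = false ∧ η i = false}

/-- The event that `t 0 < t 1 < ⋯ < t m` are consecutive points of `S_η`. -/
def renewEvent (t : ℕ → ℤ) (m : ℕ) : Set X :=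
  {η | (∀ j ≤ m, t j ∈ Sset η) ∧ ∀ x : ℤ, t 0 ≤ x → x ≤ t m → x ∈ Sset η → ∃ j ≤ m, t j = x}

/-! ### Substitution subshifts -/

/-- The smallest translation-invariant subset of `X` containing all configurations obtained
by the letterwise substitution `b ↦ w b`. -/
def substSet (w : Bool → List Bool) : Set X :=
  {η | ∃ (ζ : ℤ → Bool) (K : ℤ → ℤ),
    (∀ i : ℤ, K (i + 1) = K i + (w (ζ i)).length) ∧
    ∀ (i : ℤ) (j : ℕ) (h : j < (w (ζ i)).length), η (K i + (j : ℤ)) = (w (ζ i)).get ⟨j, h⟩}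

/-- The substitution `1 → 1100`, `0 → 10`. -/
def wLeft : Bool → List Bool := fun b => if b then [true, true, false, false] else [true, false]
/-- The substitution `1 → 0011`, `0 → 01`. -/
def wRight : Bool → List Bool := fun b => if b then [false, false, true, true] else [false, true]

/-- `X_left`. -/
def Xleft : Set X := substSet wLeft
/-- `X_right`. -/
def Xright : Set X := substSet wRight

/-- `X̂_left`: heights at most 2, a 2 is followed by a 0, a 0 is preceded by a 2. -/
def XSleft : Set XS :=
  {n | ∀ i : ℤ, n i ≤ 2 ∧ (n i = 2 → n (i + 1) = 0) ∧ (n i = 0 → n (i - 1) = 2)}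
/-- `X̂_right`: the spatial reflection of `X̂_left`. -/
def XSright : Set XS :=
  {n | ∀ i : ℤ, n i ≤ 2 ∧ (n i = 2 → n (i - 1) = 0) ∧ (n i = 0 → n (i + 1) = 2)}

/-! ### Ring measures and the grand canonical limit -/

/-- Admissible even ring configurations: all heights even, no two cyclically adjacent zeros. -/
def ringOK (L : ℕ) (n : ZMod (2 * L + 1) → ℕ) : Prop :=
  (∀ i, Even (n i)) ∧ ∀ i, ¬(n i = 0 ∧ n (i + 1) = 0)

/-- The grand canonical weight `ζ^{Σ n(i)} 4^{-z(n)}` of an admissible ring configuration. -/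
def ringW (ζ : ℝ) (L : ℕ) (n : ZMod (2 * L + 1) → ℕ) : ℝ≥0∞ :=
  if ringOK L n then
    (ENNReal.ofReal ζ) ^ (∑ i, n i) *
      ((4 : ℝ≥0∞) ^ (Finset.univ.filter (fun i => n i = 0)).card)⁻¹
  else 0

/-- The grand canonical measure `μ^(ζ,L)` on the ring of `2L+1` sites. -/
def muRing (ζ : ℝ) (L : ℕ) : Measure (ZMod (2 * L + 1) → ℕ) :=
  (∑' n, ringW ζ L n)⁻¹ • Measure.sum (fun n => ringW ζ L n • Measure.dirac n)

/-- The cylinder set in the ring determined by `m` on the window `[-K,K]`. -/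
def ringCyl (L K : ℕ) (m : ℤ → ℕ) : Set (ZMod (2 * L + 1) → ℕ) :=
  {n | ∀ i ∈ Finset.Icc (-(K : ℤ)) (K : ℤ), n ((i : ℤ) : ZMod (2 * L + 1)) = m i}

/-- The cylinder set in `X̂` determined by `m` on the window `[-K,K]`. -/
def cylS (K : ℕ) (m : ℤ → ℕ) : Set XS := {n | ∀ i ∈ Finset.Icc (-(K : ℤ)) (K : ℤ), n i = m i}

/-- `μ` is the weak limit `μ^(ζ,∞) = lim_L μ^(ζ,L)` (all cylinder probabilities converge). -/
def IsGCLimit (ζ : ℝ) (μ : Measure XS) : Prop :=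
  IsProbabilityMeasure μ ∧ ∀ (K : ℕ) (m : ℤ → ℕ),
    Tendsto (fun L : ℕ => muRing ζ L (ringCyl L K m)) atTop (nhds (μ (cylS K m)))

/-- `μ̂^(2)`: equal masses on the two configurations with alternating heights `0` and `2`. -/
def muHat2 : Measure XS :=
  (2 : ℝ≥0∞)⁻¹ • Measure.dirac (fun i : ℤ => if Even i then 2 else 0) +
    (2 : ℝ≥0∞)⁻¹ • Measure.dirac (fun i : ℤ => if Even i then 0 else 2)

/-- Mixing under the shift. -/
def MixingS (μ : Measure XS) : Prop :=
  ∀ A B : Set XS, MeasurableSet A → MeasurableSet B →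
    Tendsto (fun k : ℕ => μ (A ∩ shs^[k] ⁻¹' B)) atTop (nhds (μ A * μ B))

/-- Weak mixing under the shift. -/
def WeakMixS (μ : Measure XS) : Prop :=
  ∀ A B : Set XS, MeasurableSet A → MeasurableSet B →
    Tendsto (fun N : ℕ =>
      (∑ k ∈ Finset.range N,
        |(μ (A ∩ shs^[k] ⁻¹' B)).toReal - (μ A).toReal * (μ B).toReal|) / (N : ℝ))
      atTop (nhds 0)

/-- The Gibbs weight of `m` on the window `[a,b]`, for fugacity `ζ` and the one-body
potential `V(n) = 2 ln 2 · δ_{n,0}` (so `e^{-V(0)} = 1/4`). -/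
def gibbsW (ζ : ℝ) (a b : ℤ) (m : XS) : ℝ≥0∞ :=
  (ENNReal.ofReal ζ) ^ (∑ i ∈ Finset.Icc a b, m i) *
    ((4 : ℝ≥0∞) ^ ((Finset.Icc a b).filter (fun i => m i = 0)).card)⁻¹

/-- `μ` is a Gibbs state for fugacity `ζ` and one-body potential `V(n) = 2 ln 2 · δ_{n,0}`,
together with the hard constraints defining `X̂*_e` (DLR ratio condition). -/
def IsGibbsV (ζ : ℝ) (μ : Measure XS) : Prop :=
  μ XeSᶜ = 0 ∧ ∀ a b : ℤ, a ≤ b → ∀ m m' : XS, m ∈ XeS → m' ∈ XeS →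
    (∀ i : ℤ, i < a ∨ b < i → m i = m' i) →
    μ {n : XS | ∀ i ∈ Finset.Icc (a - 1) (b + 1), n i = m i} * gibbsW ζ a b m' =
      μ {n : XS | ∀ i ∈ Finset.Icc (a - 1) (b + 1), n i = m' i} * gibbsW ζ a b m

/-! ### The parity decomposition -/

/-- `γ(m,σ) = m + σ`. -/
def gam (p : XS × PS) : XS := fun i => p.1 i + (if p.2 i then 1 else 0)
/-- The inverse of `γ` (on `X̂*`): split a configuration into even part and parity. -/
def gamInv (n : XS) : XS × PS := (fun i => n i - n i % 2, fun i => decide (n i % 2 = 1))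
/-- Diagonal shift on `X̂ × S`. -/
def shP (p : XS × PS) : XS × PS := (shs p.1, shf p.2)
/-- The SSM dynamics acting on the first factor of `X̂ × S` and trivially on the second. -/
def QP (p : XS × PS) : Measure (XS × PS) := (QS p.1).map (fun m => (m, p.2))

/-- TIS state on `X̂*_e × S`. -/
def TIS_P (ν : Measure (XS × PS)) : Prop :=
  IsProbabilityMeasure ν ∧ ν.map shP = ν ∧ ν.bind QP = ν ∧ ν {p : XS × PS | p.1 ∉ XeS} = 0
/-- ETIS state on `X̂*_e × S`. -/
def ETIS_P (ν : Measure (XS × PS)) : Prop :=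
  TIS_P ν ∧ ∀ ν₁ ν₂ : Measure (XS × PS), TIS_P ν₁ → TIS_P ν₂ →
    ∀ p : ℝ≥0∞, 0 < p → p < 1 → ν = p • ν₁ + (1 - p) • ν₂ → ν₁ = ν

/-! ### The substitution bijection `Φ_φ` -/

/-- The starting position of the word substituted for the `i`-th letter (word `1` starts
at site `1`, and the word for `n(i)` is `0 1^{n(i)}`, of length `n(i) + 1`). -/
def Kst (n : XS) (i : ℤ) : ℤ :=
  1 + (∑ j ∈ Finset.Icc (1:ℤ) (i - 1), ((n j : ℤ) + 1)) -
    (∑ j ∈ Finset.Icc i (0:ℤ), ((n j : ℤ) + 1))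

/-- The substitution map `φ : X̂ → X`, replacing each height `n(i)` by `0 1^{n(i)}`. -/
def phiSub (n : XS) : X := fun x => if ∃ i : ℤ, Kst n i = x then false else true

/-- The normalization `Z_ν = Σ (k+1) ν({n(1) = k})`. -/
def Zsub (ν : Measure XS) : ℝ≥0∞ := ∑' k : ℕ, ((k : ℝ≥0∞) + 1) * ν {n : XS | n 1 = k}

/-- The bijection `Φ_φ` on regular TI measures induced by the substitution `φ`. -/
def Phi (ν : Measure XS) : Measure X :=
  (Zsub ν)⁻¹ • Measure.sum (fun p : (Σ k : ℕ, Fin (k + 1)) =>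
    (ν.restrict {n : XS | n 1 = p.1}).map (fun n (x : ℤ) => phiSub n (x + ((p.2 : ℕ) : ℤ))))

/-! ### Basic states -/

/-- The image `τ(A)` of a set of parity sequences under the shift. -/
def shiftSetP (A : Set PS) : Set PS := {σ | (fun i => σ (i + 1)) ∈ A}

/-- Cyclic successor in `Fin m`. -/
def finCycSucc {m : ℕ} (k : Fin m) : Fin m := ⟨(k.val + 1) % m, Nat.mod_lt _ k.pos⟩

/-- A `(λ,m)`-partition of `S`: pairwise disjoint, covering, cyclically permuted by the
shift (all modulo `λ`-null sets). -/
def IsCycPartition (lam : Measure PS) (m : ℕ) (A : Fin m → Set PS) : Prop :=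
  lam (⋃ k, A k)ᶜ = 0 ∧ (∀ k l, k ≠ l → lam (A k ∩ A l) = 0) ∧
    ∀ k, lam ((shiftSetP (A k) \ A (finCycSucc k)) ∪ (A (finCycSucc k) \ shiftSetP (A k))) = 0

/-- `ν^(q) = q⁻¹ Σ_{i<q} τ^{im}_* ν`. -/
def nuQ (ν : Measure XS) (q m : ℕ) : Measure XS :=
  ((q : ℝ≥0∞))⁻¹ • Measure.sum (fun i : Fin q => ν.map (shs^[(i : ℕ) * m]))

/-- The measure `μ̃^(λ,ν,A)` on `X̂*_e × S`, with `μ_σ = τ^k_* ν^(q)` for `σ ∈ A_k`. -/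
def mutilde (lam : Measure PS) (ν : Measure XS) (q m : ℕ) (A : Fin m → Set PS) :
    Measure (XS × PS) :=
  Measure.sum (fun k : Fin m => (((nuQ ν q m).map (shs^[(k : ℕ)])).prod (lam.restrict (A k))))

/-- `N_{ρ̂_e}`: stationary probability measures of the SSM supported on `X̂*_e` of
density `ρ̂_e` (not necessarily translation invariant). -/
def Nset (ρe : ℝ) : Set (Measure XS) :=
  {ν | IsProbabilityMeasure ν ∧ ν.bind QS = ν ∧ ν XeSᶜ = 0 ∧ densS ν ρe}

/-- `N̄_{ρ̂_e}`: the extreme points of `N_{ρ̂_e}`. -/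
def NExt (ρe : ℝ) : Set (Measure XS) :=
  {ν | ν ∈ Nset ρe ∧ ∀ ν₁ ν₂ : Measure XS, ν₁ ∈ Nset ρe → ν₂ ∈ Nset ρe →
    ∀ p : ℝ≥0∞, 0 < p → p < 1 → ν = p • ν₁ + (1 - p) • ν₂ → ν₁ = ν}

/-- `A'` is a proper refinement of `A` (modulo `λ`-null sets). -/
def ProperRefines (lam : Measure PS) {m m' : ℕ} (A' : Fin m' → Set PS) (A : Fin m → Set PS) :
    Prop :=
  m < m' ∧ ∀ j : Fin m', ∃ k : Fin m, lam (A' j \ A k) = 0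

/-- `μ` is an irreducible basic state of the SSM on `X̂*`. -/
def IsIrreducibleBasic (μ : Measure XS) : Prop :=
  ∃ (lam : Measure PS) (ρe : ℝ) (ν : Measure XS) (n m q : ℕ) (A : Fin m → Set PS),
    ErgF lam ∧ 1 ≤ ρe ∧ ν ∈ NExt ρe ∧
    0 < n ∧ ν.map (shs^[n]) = ν ∧ (∀ j : ℕ, 0 < j → j < n → ν.map (shs^[j]) ≠ ν) ∧
    n = q * m ∧ IsCycPartition lam m A ∧
    (¬ ∃ (m' : ℕ) (A' : Fin m' → Set PS),
      m' ∣ n ∧ IsCycPartition lam m' A' ∧ ProperRefines lam A' A) ∧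
    μ = (mutilde lam ν q m A).map gam

/-!
Call `s` an S-point of `η` if the sites `s - 2, s - 1, s` are empty. One step of the dynamics
never creates an S-point, and for a stationary measure an event that is a.s. forward invariant is
a.s. invariant, so S-points are a.s. never destroyed either.

Let `0` be an S-point. If none of the first `k` particles to the right of `0` has an occupied
right neighbour, they all stay put, and the `(k + 1)`-st particle stays put or, if it has an
occupied right neighbour, jumps one step to the left (it cannot jump from site `1` into the
S-point). So the events "`0` is an S-point and at least `k + 1` particles lie in `[1, v]`" are
a.s. forward invariant, hence a.s. invariant, which rules out the jump. By induction on `k`, no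
particle to the right of an S-point has an occupied right neighbour. By translation invariance
and Poincaré recurrence, the S-points of a typical configuration are unbounded below as soon as
there is one, so such a configuration is frozen, an event of probability zero.
-/

section Stationary

variable {Ω : Type*} [MeasurableSpace Ω] {μ : Measure Ω} [IsFiniteMeasure μ]
  {κ : Ω → Measure Ω} [∀ ω, IsProbabilityMeasure (κ ω)]

lemma ae_ae_mem_iff_of_bind_eq_self (hκ : Measurable κ) (hμ : μ.bind κ = μ) {W : Set Ω}
    (hW : MeasurableSet W) (hinv : ∀ᵐ ω ∂μ, ω ∈ W → ∀ᵐ ω' ∂κ ω, ω' ∈ W) :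
    ∀ᵐ ω ∂μ, ∀ᵐ ω' ∂κ ω, ω' ∈ W ↔ ω ∈ W := by
  have hone : ∀ᵐ ω ∂μ, ω ∈ W → κ ω W = 1 := by
    filter_upwards [hinv] with ω h hω
    rw [(ae_mem_iff_measure_eq hW.nullMeasurableSet).1 (h hω), measure_univ]
  have hzero : ∫⁻ ω in Wᶜ, κ ω W ∂μ = 0 := by
    refine (ENNReal.add_right_inj (measure_ne_top μ W)).1 ?_
    calc μ W + ∫⁻ ω in Wᶜ, κ ω W ∂μ = ∫⁻ ω in W, κ ω W ∂μ + ∫⁻ ω in Wᶜ, κ ω W ∂μ := by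
          rw [setLIntegral_congr_fun_ae hW hone, setLIntegral_one]
      _ = (μ.bind κ) W := by
          rw [lintegral_add_compl _ hW, Measure.bind_apply hW hκ.aemeasurable]
      _ = μ W + 0 := by rw [hμ, add_zero]
  have hout : ∀ᵐ ω ∂μ, ω ∈ Wᶜ → κ ω W = 0 := by
    rw [← ae_restrict_iff' hW.compl]
    exact (lintegral_eq_zero_iff (f := fun ω => κ ω W)
      ((Measure.measurable_coe hW).comp hκ)).1 hzero
  filter_upwards [hinv, hout] with ω hin hout
  by_cases hω : ω ∈ W
  · filter_upwards [hin hω] with ω' hω' using iff_of_true hω' hω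
  · filter_upwards [measure_eq_zero_iff_ae_notMem.1 (hout hω)] with ω' hω'
      using iff_of_false hω' hω

end Stationary

lemma measurable_rbit (m : ℕ) : Measurable (rbit m) :=
  (measurable_from_top (f := fun z : ℤ => decide (z % 2 = 1))).comp (by fun_prop)

instance : IsProbabilityMeasure coin :=
  have : IsProbabilityMeasure (volume.restrict (Set.Ioo (0:ℝ) 1)) := ⟨by simp⟩
  Measure.isProbabilityMeasure_map (measurable_pi_lambda _ fun _ => measurable_rbit _).aemeasurable

lemma measurable_uncurry_fstep : Measurable (Function.uncurry fstep) := by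
  unfold Function.uncurry fstep jumpsR jumpsL wantsR wantsL
  fun_prop

instance (η : X) : IsProbabilityMeasure (QF η) :=
  Measure.isProbabilityMeasure_map measurable_uncurry_fstep.of_uncurry_left.aemeasurable

lemma measurable_QF : Measurable QF :=
  Measure.measurable_of_measurable_coe _ fun s hs => by
    have h (η : X) : QF η s = coin (Prod.mk η ⁻¹' (Function.uncurry fstep ⁻¹' s)) :=
      Measure.map_apply measurable_uncurry_fstep.of_uncurry_left hs
    simp_rw [h]
    exact measurable_measure_prodMk_left (measurable_uncurry_fstep hs)

lemma ae_ae_fstep_mem_iff {μ : Measure X} [IsFiniteMeasure μ] (hstat : μ.bind QF = μ)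
    {W : Set X} (hW : MeasurableSet W) (hinv : ∀ᵐ η ∂μ, η ∈ W → ∀ᵐ α ∂coin, fstep η α ∈ W) :
    ∀ᵐ η ∂μ, ∀ᵐ α ∂coin, fstep η α ∈ W ↔ η ∈ W := by
  have hf (η : X) : AEMeasurable (fstep η) coin :=
    measurable_uncurry_fstep.of_uncurry_left.aemeasurable
  have h := ae_ae_mem_iff_of_bind_eq_self measurable_QF hstat hW <| by
    filter_upwards [hinv] with η h hη using (ae_map_iff (hf η) hW).2 (h hη)
  filter_upwards [h] with η hη
  exact (ae_map_iff (hf η) (by measurability)).1 hη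

section Dynamics

variable {η : X} {α : ℤ → Bool} {i : ℤ}

lemma fstep_eq_true_of_isolated (hi : η i = true) (hl : η (i - 1) = false)
    (hr : η (i + 1) = false) : fstep η α i = true := by
  simp [fstep, jumpsR, jumpsL, wantsR, wantsL, hi, hl, hr]

lemma fstep_pred_eq_true_of_pair (hi : η i = true) (hr : η (i + 1) = true)
    (hl : η (i - 1) = false) (hc : η (i - 2) = false ∨ η (i - 3) = false) :
    fstep η α (i - 1) = true := by
  have e1 : i - 2 - 1 = i - 3 := by ring
  have e2 : i - 2 + 1 = i - 1 := by ring
  rcases hc with hc | hc <;> simp [fstep, jumpsR, jumpsL, wantsR, wantsL, hi, hr, hl, hc, e1, e2]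

lemma fstep_pred_or_of_vacated (hi : η i = true) (h : fstep η α i = false) :
    fstep η α (i - 1) = true ∨ η (i - 1) = true := by
  simp only [fstep, sub_add_cancel] at h ⊢
  cases hL : jumpsL η α i <;> simp_all [jumpsR, wantsR]

lemma fstep_succ_or_of_vacated (hi : η i = true) (h : fstep η α i = false) :
    fstep η α (i + 1) = true ∨ η (i + 1) = true := by
  simp only [fstep, add_sub_cancel_right] at h ⊢
  cases hR : jumpsR η α i <;> simp_all [jumpsL, wantsL]

lemma fstep_near_eq_true (hi : η i = true) :
    fstep η α (i - 1) = true ∨ fstep η α i = true ∨ fstep η α (i + 1) = true := by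
  simp only [fstep, sub_add_cancel, add_sub_cancel_right]
  cases hL : jumpsL η α i <;> cases hR : jumpsR η α i <;> simp_all

lemma mem_Sset_of_mem_Sset_fstep {s : ℤ} (h : s ∈ Sset (fstep η α)) : s ∈ Sset η := by
  obtain ⟨h2, h1, h0⟩ := h
  have hmid : η (s - 1) = false := by
    by_contra hocc
    have := fstep_near_eq_true (α := α) (Bool.not_eq_false _ ▸ hocc)
    rw [show s - 1 - 1 = s - 2 by ring, sub_add_cancel] at this
    simp_all
  refine ⟨?_, hmid, ?_⟩
  · by_contra hocc
    have := fstep_succ_or_of_vacated (Bool.not_eq_false _ ▸ hocc) h2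
    rw [show s - 2 + 1 = s - 1 by ring] at this
    simp_all
  · by_contra hocc
    have := fstep_pred_or_of_vacated (Bool.not_eq_false _ ▸ hocc) h0
    simp_all

end Dynamics

section Counting

open Finset

def numParticles (η : X) (n : ℤ) : ℕ := ∑ j ∈ Icc 1 n, (η j).toNat

variable {η ξ : X} {k : ℕ} {i n m : ℤ}

lemma measurable_numParticles (n : ℤ) : Measurable fun η : X => numParticles η n :=
  Finset.measurable_sum _ fun j _ =>
    (measurable_from_top (f := Bool.toNat)).comp (measurable_pi_apply j)

lemma numParticles_of_nonpos (hn : n ≤ 0) : numParticles η n = 0 := by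
  rw [numParticles, Icc_eq_empty (by omega), sum_empty]

lemma numParticles_add_one (hn : 0 ≤ n) :
    numParticles η (n + 1) = numParticles η n + (η (n + 1)).toNat := by
  rw [numParticles, numParticles, ← insert_Icc_right_eq_Icc_add_one (by omega),
    sum_insert (by simp), add_comm]

lemma numParticles_sub_one_add_toNat (hi : 1 ≤ i) :
    numParticles η (i - 1) + (η i).toNat = numParticles η i := by
  simpa using (numParticles_add_one (η := η) (n := i - 1) (by omega)).symm

lemma numParticles_mono (h : n ≤ m) : numParticles η n ≤ numParticles η m :=
  sum_le_sum_of_subset (Icc_subset_Icc_right h)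

lemma numParticles_le_of_imp (h : ∀ j, 1 ≤ j → j ≤ n → η j = true → ξ j = true) :
    numParticles η n ≤ numParticles ξ n := by
  refine sum_le_sum fun j hj => ?_
  rw [mem_Icc] at hj
  cases hη : η j
  · exact Nat.zero_le _
  · simp [h j hj.1 hj.2 hη]

lemma exists_numParticles_eq (h : k + 1 ≤ numParticles η n) :
    ∃ i ≤ n, 1 ≤ i ∧ η i = true ∧ numParticles η i = k + 1 := by
  induction n using Int.induction_on with
  | zero => simp [numParticles_of_nonpos le_rfl] at h
  | pred m _ =>
    rw [numParticles_of_nonpos (by omega)] at h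
    omega
  | succ m ih =>
    by_cases hm : k + 1 ≤ numParticles η m
    · obtain ⟨i, hin, hi⟩ := ih hm
      exact ⟨i, by omega, hi⟩
    rw [numParticles_add_one (by omega)] at h
    cases hη : η (m + 1) <;> simp only [hη, Bool.toNat_false, Bool.toNat_true] at h
    · omega
    · refine ⟨m + 1, le_rfl, by omega, hη, ?_⟩
      rw [numParticles_add_one (by omega), hη, Bool.toNat_true]
      omega

end Counting

/-- None of the first `k` particles to the right of the origin has an occupied right
neighbour. -/
def NoPairAmongFirst (k : ℕ) (η : X) : Prop :=
  ∀ j, 1 ≤ j → η j = true → numParticles η j ≤ k → η (j + 1) = false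

namespace NoPairAmongFirst

variable {η : X} {α : ℤ → Bool} {k : ℕ} {i n : ℤ}

lemma pred_eq_false (h : NoPairAmongFirst k η) (h0 : η 0 = false) (hi : 1 ≤ i)
    (hocc : η i = true) (hcnt : numParticles η (i - 1) ≤ k) : η (i - 1) = false := by
  by_contra hl
  rw [Bool.not_eq_false] at hl
  rcases hi.eq_or_lt with rfl | hi
  · simp_all
  · have := h (i - 1) (by omega) hl hcnt
    simp_all

lemma numParticles_le_fstep (h : NoPairAmongFirst k η) (h0 : η 0 = false)
    (hn : numParticles η n ≤ k) : numParticles η n ≤ numParticles (fstep η α) n :=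
  numParticles_le_of_imp fun j hj hjn hocc =>
    have hjk : numParticles η j ≤ k := (numParticles_mono hjn).trans hn
    fstep_eq_true_of_isolated hocc
      (h.pred_eq_false h0 hj hocc ((numParticles_mono (by omega)).trans hjk)) (h j hj hocc hjk)

lemma le_numParticles_fstep (h : NoPairAmongFirst k η) (h0 : η 0 = false)
    (hm1 : η (-1) = false) (hi : 1 ≤ i) (hocc : η i = true)
    (hcnt : numParticles η i = k + 1) (hstep : fstep η α 0 = false) :
    k + 1 ≤ numParticles (fstep η α) (if η (i + 1) then i - 1 else i) := by
  have hprev : numParticles η (i - 1) = k := by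
    have := numParticles_sub_one_add_toNat (η := η) hi
    simp only [hocc, Bool.toNat_true] at this
    omega
  have hl : η (i - 1) = false := h.pred_eq_false h0 hi hocc hprev.le
  cases hr : η (i + 1)
  · have hstay := h.numParticles_le_fstep (α := α) h0 hprev.le
    have := numParticles_sub_one_add_toNat (η := fstep η α) hi
    simp only [fstep_eq_true_of_isolated hocc hl hr, Bool.toNat_true] at this
    simp only [Bool.false_eq_true, if_false]
    omega
  have hi2 : 2 ≤ i := by
    by_contra
    obtain rfl : i = 1 := by omega
    have := fstep_pred_eq_true_of_pair (α := α) hocc hr hl (Or.inl hm1)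
    simp_all
  have hc : η (i - 2) = false ∨ η (i - 3) = false := by
    by_cases h3 : η (i - 3) = true
    · have hi4 : 4 ≤ i := by
        by_contra
        obtain rfl | rfl : i = 2 ∨ i = 3 := by omega
        all_goals simp_all
      left
      simpa [show i - 3 + 1 = i - 2 by ring] using
        h (i - 3) (by omega) h3 ((numParticles_mono (by omega)).trans hprev.le)
    · exact Or.inr (by simpa using h3)
  have hjump := fstep_pred_eq_true_of_pair (α := α) hocc hr hl hc
  have hη := numParticles_sub_one_add_toNat (η := η) (i := i - 1) (by omega)
  have hξ := numParticles_sub_one_add_toNat (η := fstep η α) (i := i - 1) (by omega)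
  have hstay := h.numParticles_le_fstep (α := α) (n := i - 1 - 1) h0 (by omega)
  simp only [hl, hjump, Bool.toNat_false, Bool.toNat_true] at hη hξ
  simp only [if_true]
  omega

end NoPairAmongFirst

section Shift

/-- `shiftBy s = τ^(-s)`. -/
def shiftBy (s : ℤ) (η : X) : X := fun i => η (i + s)

variable {μ : Measure X}

lemma measurable_shiftBy (s : ℤ) : Measurable (shiftBy s) :=
  measurable_pi_lambda _ fun _ => measurable_pi_apply _

lemma shiftBy_zero : shiftBy 0 = id := by
  ext η i
  simp [shiftBy]

lemma shiftBy_comp_shiftBy (s t : ℤ) : shiftBy s ∘ shiftBy t = shiftBy (s + t) := by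
  ext η i
  simp [shiftBy, add_assoc]

lemma iterate_shiftBy_one (n : ℕ) : (shiftBy 1)^[n] = shiftBy n := by
  induction n with
  | zero => simp [shiftBy_zero]
  | succ n ih =>
    rw [Function.iterate_succ', ih, shiftBy_comp_shiftBy]
    push_cast
    ring_nf

lemma mem_Sset_shiftBy {η : X} {i s : ℤ} : i ∈ Sset (shiftBy s η) ↔ i + s ∈ Sset η := by
  simp only [Sset, shiftBy, Set.mem_ofPred_eq, sub_add_eq_add_sub]

lemma measurePreserving_shiftBy (hTI : μ.map shf = μ) (s : ℤ) :
    MeasurePreserving (shiftBy s) μ μ := by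
  have hneg : MeasurePreserving (shiftBy (-1)) μ μ := ⟨measurable_shiftBy _, hTI⟩
  have hpos : MeasurePreserving (shiftBy 1) μ μ := by
    refine ⟨measurable_shiftBy _, ?_⟩
    conv_lhs => rw [← hneg.map_eq]
    rw [Measure.map_map (measurable_shiftBy _) (measurable_shiftBy _), shiftBy_comp_shiftBy]
    simp [shiftBy_zero]
  induction s using Int.induction_on with
  | zero => simpa [shiftBy_zero] using MeasurePreserving.id μ
  | succ n ih => simpa [shiftBy_comp_shiftBy, add_comm] using hpos.comp ih
  | pred n ih => simpa [shiftBy_comp_shiftBy, sub_eq_neg_add] using hneg.comp ih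

variable [IsFiniteMeasure μ]

lemma measure_setOf_isLeast_Sset_zero (hTI : μ.map shf = μ) :
    μ {η | IsLeast (Sset η) 0} = 0 := by
  by_contra h
  have hmeas : MeasurableSet {η : X | IsLeast (Sset η) 0} := by
    simp only [IsLeast, lowerBounds, Sset, Set.mem_ofPred_eq]
    measurability
  obtain ⟨η, hη, m, hm, hmη⟩ :=
    (measurePreserving_shiftBy hTI 1).conservative.exists_mem_iterate_mem
      hmeas.nullMeasurableSet h
  rw [Set.mem_ofPred_eq, iterate_shiftBy_one] at hmη
  have := hmη.2 (mem_Sset_shiftBy.2 (by simpa using hη.1) : -(m : ℤ) ∈ _)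
  omega

lemma ae_exists_mem_Sset_lt (hTI : μ.map shf = μ) :
    ∀ᵐ η ∂μ, (Sset η).Nonempty → ∀ m, ∃ s ∈ Sset η, s < m := by
  have h : ∀ᵐ η ∂μ, ∀ t : ℤ, ¬ IsLeast (Sset (shiftBy t η)) 0 := ae_all_iff.2 fun t =>
    (measurePreserving_shiftBy hTI t).quasiMeasurePreserving.ae
      (measure_eq_zero_iff_ae_notMem.1 (measure_setOf_isLeast_Sset_zero hTI))
  filter_upwards [h] with η hη hne m
  by_contra! hbdd
  obtain ⟨t, ht, hmin⟩ := Int.exists_least_of_bdd ⟨m, hbdd⟩ hne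
  refine hη t ⟨mem_Sset_shiftBy.2 (by simpa using ht), fun s hs => ?_⟩
  have := hmin _ (mem_Sset_shiftBy.1 hs)
  omega

end Shift

def window (k : ℕ) (v : ℤ) : Set X := {η | 0 ∈ Sset η ∧ k + 1 ≤ numParticles η v}

section SPoints

variable {μ : Measure X} [IsFiniteMeasure μ]

lemma measurableSet_zero_mem_Sset : MeasurableSet {η : X | 0 ∈ Sset η} := by
  simp only [Sset, Set.mem_ofPred_eq]
  measurability

lemma measurableSet_window (k : ℕ) (v : ℤ) : MeasurableSet (window k v) :=
  measurableSet_zero_mem_Sset.inter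
    (measurableSet_le measurable_const (measurable_numParticles v))

lemma ae_ae_zero_mem_Sset_fstep_iff (hstat : μ.bind QF = μ) :
    ∀ᵐ η ∂μ, ∀ᵐ α ∂coin, 0 ∈ Sset (fstep η α) ↔ 0 ∈ Sset η := by
  have h := ae_ae_fstep_mem_iff hstat measurableSet_zero_mem_Sset.compl <|
    ae_of_all _ fun η hη => ae_of_all _ fun α hα => hη (mem_Sset_of_mem_Sset_fstep hα)
  filter_upwards [h] with η hη
  filter_upwards [hη] with α hα using not_iff_not.1 hα

lemma ae_ae_fstep_mem_window_iff (hstat : μ.bind QF = μ) {k : ℕ}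
    (hk : ∀ᵐ η ∂μ, 0 ∈ Sset η → NoPairAmongFirst k η) :
    ∀ᵐ η ∂μ, ∀ v, ∀ᵐ α ∂coin, fstep η α ∈ window k v ↔ η ∈ window k v := by
  have hS := ae_ae_zero_mem_Sset_fstep_iff hstat
  refine ae_all_iff.2 fun v => ae_ae_fstep_mem_iff hstat (measurableSet_window k v) ?_
  filter_upwards [hk, hS] with η hη hSη ⟨h0, hv⟩
  filter_upwards [hSη] with α hα
  obtain ⟨i, hiv, hi, hocc, hcnt⟩ := exists_numParticles_eq hv
  have h0' := hα.2 h0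
  refine ⟨h0', ((hη h0).le_numParticles_fstep h0.2.2 h0.2.1 hi hocc hcnt h0'.2.2).trans
    (numParticles_mono ?_)⟩
  split <;> omega

lemma ae_noPairAmongFirst (hstat : μ.bind QF = μ) (k : ℕ) :
    ∀ᵐ η ∂μ, 0 ∈ Sset η → NoPairAmongFirst k η := by
  induction k with
  | zero =>
    refine ae_of_all _ fun η _ j hj hocc hcnt => absurd hcnt ?_
    have := numParticles_sub_one_add_toNat (η := η) hj
    simp only [hocc, Bool.toNat_true] at this
    omega
  | succ k ih =>
    filter_upwards [ih, ae_ae_zero_mem_Sset_fstep_iff hstat,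
      ae_ae_fstep_mem_window_iff hstat ih] with η hη hS hwin h0 j hj hocc hcnt
    rcases hcnt.lt_or_eq with hlt | heq
    · exact hη h0 j hj hocc (by omega)
    by_contra hr
    rw [Bool.not_eq_false] at hr
    obtain ⟨α, hα, hαW⟩ := (hS.and (hwin (j - 1))).exists
    -- the jump of the `(k + 1)`-st particle from `j` to `j - 1` enters `window k (j - 1)`
    have hstep := (hη h0).le_numParticles_fstep h0.2.2 h0.2.1 hj hocc heq (hα.2 h0).2.2
    rw [if_pos hr] at hstep
    have hle := (hαW.1 ⟨hα.2 h0, hstep⟩).2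
    have := numParticles_sub_one_add_toNat (η := η) hj
    simp only [hocc, Bool.toNat_true] at this
    omega

lemma ae_noPair_of_mem_Sset (hTI : μ.map shf = μ) (hstat : μ.bind QF = μ) :
    ∀ᵐ η ∂μ, ∀ s ∈ Sset η, ∀ j, s < j → η j = true → η (j + 1) = false := by
  have h0 : ∀ᵐ η ∂μ, 0 ∈ Sset η → ∀ j, 1 ≤ j → η j = true → η (j + 1) = false := by
    filter_upwards [ae_all_iff.2 (ae_noPairAmongFirst hstat)] with η h h0 j hj hocc
      using h (numParticles η j) h0 j hj hocc le_rfl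
  have h := ae_all_iff.2 fun s =>
    (measurePreserving_shiftBy hTI s).quasiMeasurePreserving.ae h0
  filter_upwards [h] with η h s hs j hj hocc
  simpa [shiftBy, sub_add_eq_add_sub] using
    h s (by rwa [mem_Sset_shiftBy, zero_add]) (j - s) (by omega) (by simpa [shiftBy] using hocc)

lemma ae_mem_frozenF_of_Sset_nonempty (hTI : μ.map shf = μ) (hstat : μ.bind QF = μ) :
    ∀ᵐ η ∂μ, (Sset η).Nonempty → η ∈ frozenF := by
  filter_upwards [ae_exists_mem_Sset_lt hTI, ae_noPair_of_mem_Sset hTI hstat]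
    with η hlt hnoPair hne j
  obtain ⟨s, hs, hsj⟩ := hlt hne j
  cases hj : η j
  · exact Or.inl rfl
  · exact Or.inr (hnoPair s hs j hsj hj)

end SPoints

theorem no_three_consecutive_zeros_general
    (μ : Measure X) (hμ : TISF μ) (hF : μ frozenF = 0) :
    μ {η : X | ∃ i : ℤ, η i = false ∧ η (i + 1) = false ∧ η (i + 2) = false} = 0 := by
  obtain ⟨⟨_, hTI⟩, hstat⟩ := hμ
  refine measure_mono_null (fun η ⟨i, hi⟩ => ?_)
    (measure_union_null (ae_iff.1 (ae_mem_frozenF_of_Sset_nonempty hTI hstat)) hF)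
  by_cases hη : η ∈ frozenF
  · exact Or.inr hη
  · refine Or.inl fun h => hη (h ⟨i + 2, ?_⟩)
    simpa [Sset, add_sub_cancel_right, add_sub_assoc] using hi

/-- A regular TIS state with `μ(F) = 0` gives probability zero to
configurations containing three consecutive empty sites. -/
theorem no_three_consecutive_zeros
    (μ : Measure X) (hreg : RegF μ) (hμ : TISF μ) (hF : μ frozenF = 0) :
    μ {η : X | ∃ i : ℤ, η i = false ∧ η (i + 1) = false ∧ η (i + 2) = false} = 0 :=
  no_three_consecutive_zeros_general μ hμ hF

end FSSEPPaper
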